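/- arXiv:0907.0916 — 9 statements merged into one kernel-verified Lean document; each statement's English description precedes it below -/
import Mathlib

section
/- For every positive natural number n, we have (1/n) · ∑_{k=1}^{n} gcd(n, k) = ∏_{p prime, p ∣ n} (1 + (1 - 1/p) · ord_p(n)), where the equality is between rational numbers. -/
/-!
Grouping `k ≤ n` by `d = gcd(n, k)` gives `φ(n / d)` values of `k` for each `d ∣ n`, so the
gcd sum is the Dirichlet convolution `id * φ` and hence multiplicative. At a prime power,
`∑_{i ≤ a} p^i φ(p^(a-i)) = p^a + a p^(a-1) (p - 1)`, i.e. `p^a (1 + (1 - 1/p) a)`.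
-/

open Finset ArithmeticFunction

namespace Nat

theorem sum_Icc_gcd_eq_sum_range_gcd (n : ℕ) :
    ∑ k ∈ Icc 1 n, n.gcd k = ∑ k ∈ range n, n.gcd k := by
  have h := sum_range_succ (fun k => n.gcd k) n
  rw [sum_range_succ', gcd_self, gcd_zero_right, add_left_inj] at h
  rw [← h, range_eq_Ico, ← Ico_add_one_right_eq_Icc, sum_Ico_add' (c := 1)]

theorem sum_range_gcd_eq_sum_divisors {n : ℕ} (hn : n ≠ 0) :
    ∑ k ∈ range n, n.gcd k = ∑ d ∈ n.divisors, d * φ (n / d) := by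
  rw [← sum_fiberwise_of_maps_to (g := n.gcd)
    fun k _ => mem_divisors.mpr ⟨gcd_dvd_left n k, hn⟩]
  refine sum_congr rfl fun d hd => ?_
  rw [sum_congr rfl fun k hk => (mem_filter.mp hk).2, sum_const, smul_eq_mul,
    ← totient_div_of_dvd (dvd_of_mem_divisors hd), mul_comm]

end Nat

namespace ArithmeticFunction

def totient : ArithmeticFunction ℕ := ⟨Nat.totient, Nat.totient_zero⟩

theorem isMultiplicative_totient : totient.IsMultiplicative :=
  ⟨Nat.totient_one, Nat.totient_mul⟩

/-- Pillai's function `n ↦ ∑_{k=1}^n gcd(n, k)`, defined as the convolution `id * φ`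
(see `pillai_apply`). -/
def pillai : ArithmeticFunction ℕ := .id * totient

theorem isMultiplicative_pillai : pillai.IsMultiplicative :=
  isMultiplicative_id.mul isMultiplicative_totient

theorem pillai_apply_eq_sum_divisors (n : ℕ) :
    pillai n = ∑ d ∈ n.divisors, d * Nat.totient (n / d) := by
  rw [pillai, mul_apply]
  exact Nat.sum_divisorsAntidiagonal fun d e => d * Nat.totient e

theorem pillai_apply (n : ℕ) : pillai n = ∑ k ∈ Icc 1 n, n.gcd k := by
  rcases eq_or_ne n 0 with rfl | hn
  · simp
  rw [pillai_apply_eq_sum_divisors, Nat.sum_Icc_gcd_eq_sum_range_gcd,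
    Nat.sum_range_gcd_eq_sum_divisors hn]

theorem pillai_prime_pow_succ {p : ℕ} (hp : p.Prime) (a : ℕ) :
    pillai (p ^ (a + 1)) = p ^ (a + 1) + (a + 1) * (p ^ a * (p - 1)) := by
  rw [pillai_apply_eq_sum_divisors, Nat.sum_divisors_prime_pow hp, sum_range_succ,
    Nat.div_self (pow_pos hp.pos _), Nat.totient_one, mul_one, add_comm,
    sum_const_nat fun i hi => ?_, card_range]
  have hi : i ≤ a := Nat.lt_succ_iff.mp (mem_range.mp hi)
  rw [Nat.pow_div (by omega) hp.pos, show a + 1 - i = (a - i) + 1 by omega,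
    Nat.totient_prime_pow_succ hp, ← mul_assoc, ← pow_add, Nat.add_sub_cancel' hi]

theorem pillai_prime_pow_div {p : ℕ} (hp : p.Prime) (a : ℕ) :
    (pillai (p ^ a) : ℚ) / p ^ a = 1 + (1 - 1 / p) * a := by
  have hp0 : (p : ℚ) ≠ 0 := by exact_mod_cast hp.ne_zero
  cases a with
  | zero => simp [isMultiplicative_pillai.map_one]
  | succ a =>
    rw [pillai_prime_pow_succ hp]
    push_cast [hp.one_le]
    field_simp
    ring

theorem IsMultiplicative.div_eq_prod_primeFactors {K : Type*} [Semifield K]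
    {f : ArithmeticFunction K} (hf : f.IsMultiplicative) {n : ℕ} (hn : n ≠ 0) :
    f n / n =
      ∏ p ∈ n.primeFactors, f (p ^ n.factorization p) / (p : K) ^ n.factorization p := by
  rw [prod_div_distrib, ← Nat.prod_factorization_eq_prod_primeFactors (fun p k => f (p ^ k)),
    ← hf.multiplicative_factorization f hn]
  congr 1
  exact_mod_cast congrArg (Nat.cast (R := K)) (Nat.prod_primeFactors_pow_factorization hn)

end ArithmeticFunction

theorem stmt_0 (n : ℕ) (hn : 0 < n) :
    (1 / (n : ℚ)) * ∑ k ∈ Finset.Icc 1 n, (Nat.gcd n k : ℚ) =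
      ∏ p ∈ n.primeFactors, (1 + (1 - 1 / (p : ℚ)) * (n.factorization p : ℚ)) := by
  have hsum : ∑ k ∈ Icc 1 n, (n.gcd k : ℚ) = (pillai : ArithmeticFunction ℚ) n := by
    rw [natCoe_apply, pillai_apply]
    push_cast
    rfl
  rw [one_div_mul_eq_div, hsum, isMultiplicative_pillai.natCast.div_eq_prod_primeFactors hn.ne']
  refine prod_congr rfl fun p hp => ?_
  rw [natCoe_apply]
  exact_mod_cast pillai_prime_pow_div (Nat.prime_of_mem_primeFactors hp) _
end

section
/- For all positive natural numbers n and r, we have (1/n^r) · ∑_{k₁=1}^{n} ⋯ ∑_{k_r=1}^{n} gcd(n, k₁·k₂⋯k_r) = ∏_{p prime, p ∣ n} [ ∑_{l=0}^{r} H(ord_p(n), l) · (1 - 1/p)^l ], where the equality is between rational numbers. -/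
/-!
Splitting off the first coordinate and using `gcd(d, a m) = gcd(d, a) gcd(d / gcd(d, a), m)`
shows that, for `d ∣ n`, the mean `A_r(d)` of `gcd(d, k₁ ⋯ k_r)` over `k ∈ [1, n]^r`
satisfies `A_{r+1}(d) = ∑_{e ∣ d} (φ(e) / e) A_r(e)`, because `gcd(d, a) = d / e` for exactly
`(n / d) φ(e)` values `a ∈ [1, n]`. Hence `A_r` is multiplicative, and on prime powers `p^b`
the recursion is the one satisfied by the truncations `∑_{l ≤ r} H(b, l) x^l` of `(1 - x)^{-b}`
at `x = 1 - 1/p`.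
-/

open Finset ArithmeticFunction
open scoped ArithmeticFunction.zeta Nat

theorem Nat.gcd_mul_right_eq_gcd_mul_gcd_div (n k m : ℕ) :
    gcd n (k * m) = gcd n k * gcd (n / gcd n k) m := by
  rcases Nat.eq_zero_or_pos (gcd n k) with h | hpos
  · rw [Nat.gcd_eq_zero_iff] at h
    simp [h.1, h.2]
  obtain ⟨g, n', k', hg, hcop, rfl, rfl⟩ := Nat.exists_coprime' hpos
  have hgcd : gcd (n' * g) (k' * g) = g := by rw [Nat.gcd_mul_right, hcop, one_mul]
  rw [hgcd, Nat.mul_div_cancel _ hg, mul_comm n' g, mul_comm k' g, mul_assoc, Nat.gcd_mul_left,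
    Nat.gcd_mul_right_right_of_gcd_eq_one hcop]

section Sums

variable {M : Type*} [AddCommMonoid M]

theorem Finset.sum_Icc_one_eq_sum_range_of_eq {g : ℕ → M} {n : ℕ} (h : g n = g 0) :
    ∑ k ∈ Icc 1 n, g k = ∑ k ∈ range n, g k := by
  rcases n with _ | m
  · simp
  rw [← Ico_add_one_right_eq_Icc, sum_Ico_eq_sum_range, Nat.add_sub_cancel,
    sum_range_succ (fun k => g (1 + k)), sum_range_succ' g, add_comm 1 m, h]
  simp only [add_comm 1]

theorem Function.Periodic.sum_range_mul {g : ℕ → M} {d : ℕ} (hg : Function.Periodic g d)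
    (m : ℕ) : ∑ k ∈ range (m * d), g k = m • ∑ k ∈ range d, g k := by
  induction m with
  | zero => simp
  | succ m ih =>
    rw [add_mul, one_mul, sum_range_add, ih, succ_nsmul]
    congr 1
    refine sum_congr rfl fun k _ => ?_
    rw [add_comm]
    exact hg.nat_mul m k

theorem Nat.sum_range_comp_gcd (d : ℕ) (f : ℕ → M) :
    ∑ k ∈ range d, f (gcd d k) = ∑ e ∈ d.divisors, φ e • f (d / e) := by
  rcases Nat.eq_zero_or_pos d with rfl | hd
  · simp
  rw [← sum_fiberwise_of_maps_to (g := gcd d) (t := d.divisors)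
    (fun k _ => Nat.mem_divisors.2 ⟨Nat.gcd_dvd_left d k, hd.ne'⟩)]
  conv_rhs => rw [← Nat.sum_div_divisors d]
  refine sum_congr rfl fun g hg => ?_
  rw [sum_congr rfl fun k hk => congrArg f (mem_filter.1 hk).2, sum_const,
    Nat.totient_div_of_dvd (Nat.dvd_of_mem_divisors hg),
    Nat.div_div_self (Nat.dvd_of_mem_divisors hg) hd.ne']

theorem Nat.sum_Icc_comp_gcd {d n : ℕ} (h : d ∣ n) (f : ℕ → M) :
    ∑ k ∈ Icc 1 n, f (gcd d k) = (n / d) • ∑ e ∈ d.divisors, φ e • f (d / e) := by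
  have hper : Function.Periodic (fun k => f (gcd d k)) d := fun k => by simp
  obtain ⟨m, rfl⟩ := h
  rw [sum_Icc_one_eq_sum_range_of_eq (by simp), mul_comm, hper.sum_range_mul,
    Nat.sum_range_comp_gcd]
  rcases Nat.eq_zero_or_pos d with rfl | hd
  · simp
  · rw [Nat.mul_div_cancel _ hd]

theorem Fintype.sum_piFinset_const_succ {α : Type*} {r : ℕ} (s : Finset α)
    (f : (Fin (r + 1) → α) → M) :
    ∑ x ∈ Fintype.piFinset (fun _ => s), f x =
      ∑ a ∈ s, ∑ y ∈ Fintype.piFinset (fun _ : Fin r => s), f (Fin.cons a y) := by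
  have hcons := filter_piFinset_eq_map_consEquiv (fun _ : Fin (r + 1) => s) (fun _ => True)
  simp only [filter_true] at hcons
  rw [hcons, sum_map, sum_product]
  rfl

end Sums

def totientDivId : ArithmeticFunction ℚ :=
  ⟨fun n => φ n / n, by simp⟩

theorem totientDivId_apply (n : ℕ) : totientDivId n = φ n / n := rfl

theorem isMultiplicative_totientDivId : totientDivId.IsMultiplicative := by
  refine IsMultiplicative.iff_ne_zero.2 ⟨by simp [totientDivId_apply], fun {m n} _ _ hmn => ?_⟩
  simp only [totientDivId_apply, Nat.totient_mul hmn, Nat.cast_mul]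
  exact mul_div_mul_comm _ _ _ _

theorem totientDivId_prime_pow_succ {p : ℕ} (hp : p.Prime) (c : ℕ) :
    totientDivId (p ^ (c + 1)) = 1 - 1 / p := by
  have hp0 : (p : ℚ) ≠ 0 := by exact_mod_cast hp.ne_zero
  rw [totientDivId_apply, Nat.totient_prime_pow_succ hp, Nat.cast_mul, Nat.cast_pred hp.pos]
  push_cast
  field_simp
  ring

/-- `gcdMean r d` is the mean of `gcd(d, k₁ ⋯ k_r)` over `[1, n]^r` for every multiple `n`
of `d` (`sum_piFinset_Icc_gcd_prod`); it is defined by the recursion this mean satisfies. -/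
def gcdMean : ℕ → ArithmeticFunction ℚ
  | 0 => ζ
  | r + 1 => totientDivId.pmul (gcdMean r) * ζ

theorem isMultiplicative_gcdMean (r : ℕ) : (gcdMean r).IsMultiplicative := by
  induction r with
  | zero => exact isMultiplicative_zeta.natCast
  | succ r ih => exact (isMultiplicative_totientDivId.pmul ih).mul isMultiplicative_zeta.natCast

theorem gcdMean_succ_apply (r n : ℕ) :
    gcdMean (r + 1) n = ∑ e ∈ n.divisors, totientDivId e * gcdMean r e := by
  simp only [gcdMean, coe_mul_zeta_apply, pmul_apply]

section MultichooseTrunc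

variable {R : Type*} [CommSemiring R]

def multichooseTrunc (b r : ℕ) (x : R) : R :=
  ∑ l ∈ range (r + 1), (b.multichoose l : R) * x ^ l

theorem multichooseTrunc_zero_left (r : ℕ) (x : R) : multichooseTrunc 0 r x = 1 := by
  simp [multichooseTrunc, sum_range_succ', Nat.multichoose_zero_succ]

theorem multichooseTrunc_zero_right (b : ℕ) (x : R) : multichooseTrunc b 0 x = 1 := by
  simp [multichooseTrunc]

theorem multichooseTrunc_succ_succ (b r : ℕ) (x : R) :
    multichooseTrunc (b + 1) (r + 1) x =
      multichooseTrunc b (r + 1) x + x * multichooseTrunc (b + 1) r x := by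
  simp only [multichooseTrunc]
  have hshift : x * ∑ l ∈ range (r + 1), ((b + 1).multichoose l : R) * x ^ l =
      ∑ l ∈ range (r + 1), ((b + 1).multichoose l : R) * x ^ (l + 1) := by
    rw [mul_sum]
    exact sum_congr rfl fun l _ => by ring
  rw [hshift, sum_range_succ' _ (r + 1),
    sum_range_succ' (fun l => (b.multichoose l : R) * x ^ l) (r + 1)]
  simp only [Nat.multichoose_succ_succ, Nat.multichoose_zero_right, Nat.cast_add, add_mul,
    sum_add_distrib]
  ring

theorem multichooseTrunc_succ_right (b r : ℕ) (x : R) :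
    multichooseTrunc b (r + 1) x = 1 + x * ∑ c ∈ range b, multichooseTrunc (c + 1) r x := by
  induction b with
  | zero => simp [multichooseTrunc_zero_left]
  | succ b ih => rw [multichooseTrunc_succ_succ, ih, sum_range_succ]; ring

end MultichooseTrunc

theorem gcdMean_prime_pow {p : ℕ} (hp : p.Prime) (r b : ℕ) :
    gcdMean r (p ^ b) = multichooseTrunc b r (1 - 1 / (p : ℚ)) := by
  induction r generalizing b with
  | zero => simp [gcdMean, hp.ne_zero, multichooseTrunc_zero_right]
  | succ r ih =>
    rw [gcdMean_succ_apply, Nat.sum_divisors_prime_pow hp, sum_range_succ',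
      multichooseTrunc_succ_right, mul_sum]
    simp only [totientDivId_prime_pow_succ hp, ih, pow_zero, isMultiplicative_totientDivId.map_one,
      (isMultiplicative_gcdMean r).map_one]
    ring

theorem sum_piFinset_Icc_gcd_prod (r : ℕ) {d n : ℕ} (hd : d ≠ 0) (hdn : d ∣ n) :
    ∑ k ∈ Fintype.piFinset (fun _ : Fin r => Icc 1 n), (Nat.gcd d (∏ i, k i) : ℚ) =
      n ^ r * gcdMean r d := by
  induction r generalizing d with
  | zero => simp [gcdMean, hd]
  | succ r ih =>
    calc ∑ k ∈ Fintype.piFinset (fun _ : Fin (r + 1) => Icc 1 n), (Nat.gcd d (∏ i, k i) : ℚ)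
        = ∑ a ∈ Icc 1 n, ∑ y ∈ Fintype.piFinset (fun _ : Fin r => Icc 1 n),
            (Nat.gcd d (a * ∏ i, y i) : ℚ) := by
          rw [Fintype.sum_piFinset_const_succ]
          simp only [Fin.prod_cons]
      _ = ∑ a ∈ Icc 1 n, (Nat.gcd d a : ℚ) * (n ^ r * gcdMean r (d / Nat.gcd d a)) := by
          refine sum_congr rfl fun a _ => ?_
          have hg : Nat.gcd d a ≠ 0 := Nat.gcd_ne_zero_left hd
          simp only [Nat.gcd_mul_right_eq_gcd_mul_gcd_div, Nat.cast_mul, ← mul_sum]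
          rw [ih (Nat.div_ne_zero_iff_of_dvd (Nat.gcd_dvd_left d a) |>.2 ⟨hd, hg⟩)
            ((Nat.div_dvd_of_dvd (Nat.gcd_dvd_left d a)).trans hdn)]
      _ = (n / d) • ∑ e ∈ d.divisors,
            φ e • (((d / e : ℕ) : ℚ) * (n ^ r * gcdMean r (d / (d / e)))) :=
          Nat.sum_Icc_comp_gcd hdn (fun g => (g : ℚ) * (n ^ r * gcdMean r (d / g)))
      _ = n ^ (r + 1) * gcdMean (r + 1) d := by
          rw [gcdMean_succ_apply, nsmul_eq_mul]
          simp only [mul_sum]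
          refine sum_congr rfl fun e he => ?_
          have hed : e ∣ d := Nat.dvd_of_mem_divisors he
          have he0 : (e : ℚ) ≠ 0 := by exact_mod_cast (Nat.pos_of_mem_divisors he).ne'
          have hd0 : (d : ℚ) ≠ 0 := by exact_mod_cast hd
          rw [Nat.div_div_self hed hd, nsmul_eq_mul, Nat.cast_div hdn hd0, Nat.cast_div hed he0,
            totientDivId_apply]
          field_simp
          ring

theorem stmt_1_general (n r : ℕ) (hn : 0 < n) :
    (1 / (n : ℚ) ^ r) *
        ∑ k ∈ Fintype.piFinset (fun _ : Fin r => Finset.Icc 1 n),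
          (Nat.gcd n (∏ i, k i) : ℚ) =
      ∏ p ∈ n.primeFactors,
        ∑ l ∈ Finset.range (r + 1),
          (Nat.multichoose (n.factorization p) l : ℚ) * (1 - 1 / (p : ℚ)) ^ l := by
  have hn0 : (n : ℚ) ^ r ≠ 0 := pow_ne_zero _ (by exact_mod_cast hn.ne')
  rw [sum_piFinset_Icc_gcd_prod r hn.ne' dvd_rfl, ← mul_assoc, one_div_mul_cancel hn0, one_mul,
    (isMultiplicative_gcdMean r).multiplicative_factorization _ hn.ne',
    Nat.prod_factorization_eq_prod_primeFactors]
  exact prod_congr rfl fun p hp => gcdMean_prime_pow (Nat.prime_of_mem_primeFactors hp) r _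

theorem stmt_1 (n r : ℕ) (hn : 0 < n) (hr : 0 < r) :
    (1 / (n : ℚ) ^ r) *
        ∑ k ∈ Fintype.piFinset (fun _ : Fin r => Finset.Icc 1 n),
          (Nat.gcd n (∏ i, k i) : ℚ) =
      ∏ p ∈ n.primeFactors,
        ∑ l ∈ Finset.range (r + 1),
          (Nat.multichoose (n.factorization p) l : ℚ) * (1 - 1 / (p : ℚ)) ^ l :=
  stmt_1_general n r hn
end

section
/- For every positive natural number n, the sequence r ↦ (1/n^r) · ∑_{k₁=1}^{n} ⋯ ∑_{k_r=1}^{n} gcd(n, k₁⋯k_r), viewed as a sequence of real numbers indexed by r, tends to n as r → ∞. -/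
/-!
Since `gcd(n, m) ≤ n`, the average of `gcd(n, k₁⋯k_r)` is at most `n`. On the other hand every
tuple with some coordinate equal to `n` contributes exactly `n`, and all but `(n - 1)^r` of the
`n^r` tuples are of this kind, so the average is at least `n - n ((n - 1)/n)^r`, which tends
to `n`.
-/

open Finset Filter Fintype

section piFinsetConst

variable {ι κ : Type*} [Fintype ι] [DecidableEq ι] [DecidableEq κ]

lemma Finset.filter_piFinset_const_forall_ne (s : Finset κ) (a : κ) :
    {k ∈ piFinset (fun _ : ι => s) | ∀ i, k i ≠ a} = piFinset fun _ : ι => s.erase a := by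
  ext k
  simp only [mem_filter, mem_piFinset, mem_erase]
  exact ⟨fun ⟨hs, hne⟩ i => ⟨hne i, hs i⟩, fun h => ⟨fun i => (h i).2, fun i => (h i).1⟩⟩

lemma Finset.card_filter_piFinset_const_exists_eq_add {s : Finset κ} {a : κ} (ha : a ∈ s) :
    #{k ∈ piFinset (fun _ : ι => s) | ∃ i, k i = a} + (#s - 1) ^ Fintype.card ι =
      #s ^ Fintype.card ι := by
  have hcompl : #{k ∈ piFinset (fun _ : ι => s) | ¬∃ i, k i = a} = (#s - 1) ^ Fintype.card ι := by
    simp only [not_exists, ← ne_eq, filter_piFinset_const_forall_ne, card_piFinset,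
      card_erase_of_mem ha, prod_const, card_univ]
  rw [← hcompl, card_filter_add_card_filter_not, card_piFinset, prod_const, card_univ]

end piFinsetConst

section gcdAverage

variable {ι : Type*} [Fintype ι] [DecidableEq ι]

lemma sum_gcd_prod_le {n : ℕ} (hn : 0 < n) :
    ∑ k ∈ piFinset (fun _ : ι => Icc 1 n), (Nat.gcd n (∏ i, k i) : ℝ) ≤
      n ^ Fintype.card ι * n := by
  calc ∑ k ∈ piFinset (fun _ : ι => Icc 1 n), (Nat.gcd n (∏ i, k i) : ℝ)
      ≤ ∑ _k ∈ piFinset (fun _ : ι => Icc 1 n), (n : ℝ) :=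
        sum_le_sum fun k _ => by exact_mod_cast Nat.gcd_le_left _ hn
    _ = n ^ Fintype.card ι * n := by simp [card_piFinset]

lemma mul_sub_pow_le_sum_gcd_prod {n : ℕ} (hn : 0 < n) :
    (n : ℝ) * (n ^ Fintype.card ι - (n - 1) ^ Fintype.card ι) ≤
      ∑ k ∈ piFinset (fun _ : ι => Icc 1 n), (Nat.gcd n (∏ i, k i) : ℝ) := by
  set A := {k ∈ piFinset (fun _ : ι => Icc 1 n) | ∃ i, k i = n}
  have hcard : (#A : ℝ) = n ^ Fintype.card ι - (n - 1) ^ Fintype.card ι := by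
    have h := card_filter_piFinset_const_exists_eq_add (ι := ι)
      (show n ∈ Icc 1 n from mem_Icc.2 ⟨hn, le_rfl⟩)
    rw [Nat.card_Icc, Nat.add_sub_cancel] at h
    rw [eq_sub_iff_add_eq, ← Nat.cast_pred hn]
    exact_mod_cast h
  have hgcd : ∀ k ∈ A, (Nat.gcd n (∏ i, k i) : ℝ) = n := by
    intro k hk
    obtain ⟨-, i, rfl⟩ := mem_filter.1 hk
    rw [Nat.gcd_eq_left (dvd_prod_of_mem k (mem_univ i))]
  calc (n : ℝ) * (n ^ Fintype.card ι - (n - 1) ^ Fintype.card ι)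
      = ∑ k ∈ A, (Nat.gcd n (∏ i, k i) : ℝ) := by
        rw [sum_congr rfl hgcd, sum_const, nsmul_eq_mul, hcard, mul_comm]
    _ ≤ ∑ k ∈ piFinset (fun _ : ι => Icc 1 n), (Nat.gcd n (∏ i, k i) : ℝ) :=
        sum_le_sum_of_subset_of_nonneg (filter_subset _ _) fun _ _ _ => by positivity

end gcdAverage

lemma tendsto_sub_mul_pred_div_pow {n : ℕ} (hn : 0 < n) :
    Tendsto (fun r : ℕ => (n : ℝ) - n * (((n : ℝ) - 1) / n) ^ r) atTop (nhds (n : ℝ)) := by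
  have hn' : (1 : ℝ) ≤ n := by exact_mod_cast hn
  have hq : Tendsto (fun r : ℕ => (((n : ℝ) - 1) / n) ^ r) atTop (nhds 0) :=
    tendsto_pow_atTop_nhds_zero_of_lt_one (div_nonneg (by linarith) (by linarith))
      ((div_lt_one (by linarith)).2 (by linarith))
  simpa using tendsto_const_nhds.sub (hq.const_mul (n : ℝ))

theorem stmt_6 (n : ℕ) (hn : 0 < n) :
    Filter.Tendsto
      (fun r : ℕ =>
        (1 / (n : ℝ) ^ r) *
          ∑ k ∈ Fintype.piFinset (fun _ : Fin r => Finset.Icc 1 n),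
            (Nat.gcd n (∏ i, k i) : ℝ))
      Filter.atTop (nhds (n : ℝ)) := by
  have hpow : ∀ r : ℕ, (0 : ℝ) < (n : ℝ) ^ r := fun r => pow_pos (by exact_mod_cast hn) r
  refine tendsto_of_tendsto_of_tendsto_of_le_of_le (tendsto_sub_mul_pred_div_pow hn)
    tendsto_const_nhds (fun r => ?_) (fun r => ?_)
  · have h := mul_sub_pow_le_sum_gcd_prod (ι := Fin r) hn
    rw [Fintype.card_fin] at h
    calc (n : ℝ) - n * (((n : ℝ) - 1) / n) ^ r
        = 1 / (n : ℝ) ^ r * (n * (n ^ r - (n - 1) ^ r)) := by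
          rw [div_pow]
          field_simp
      _ ≤ _ := mul_le_mul_of_nonneg_left h (by positivity)
  · have h := sum_gcd_prod_le (ι := Fin r) hn
    rw [Fintype.card_fin] at h
    rw [one_div, inv_mul_le_iff₀ (hpow r)]
    simpa only [mul_comm] using h
end

section
/- For every positive natural number n and every real number w with w > 1, the sequence r ↦ (1/n^r) · ∑_{k₁=1}^{n} ⋯ ∑_{k_r=1}^{n} gcd(n, k₁⋯k_r)^w, viewed as a sequence of real numbers indexed by r, tends to n^w as r → ∞, where powers with real exponent w are real powers (rpow). -/
/-!
A tuple containing the entry `n` has `gcd(n, k₁⋯k_r) = n`, and at most `(n-1)^r` of the `n^r`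
tuples avoid `n`. So the average of `gcd(n, k₁⋯k_r)^w`, which never exceeds `n^w`, is at least
`n^w (1 - ((n-1)/n)^r)`, and the squeeze gives the limit.
-/

open Finset Filter Topology

section GcdProd

variable (n r : ℕ)

theorem card_piFinset_Icc_one : #(Fintype.piFinset fun _ : Fin r => Icc 1 n) = n ^ r := by
  simp [Fintype.card_piFinset]

theorem card_filter_not_dvd_prod_le :
    #{k ∈ Fintype.piFinset (fun _ : Fin r => Icc 1 n) | ¬ n ∣ ∏ i, k i} ≤ (n - 1) ^ r := by
  calc _ ≤ #(Fintype.piFinset fun _ : Fin r => Icc 1 (n - 1)) := by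
        refine card_le_card fun k hk => ?_
        simp only [mem_filter, Fintype.mem_piFinset, mem_Icc] at hk ⊢
        intro i
        have hne : k i ≠ n := fun h => hk.2 (h ▸ dvd_prod_of_mem k (mem_univ i))
        have := hk.1 i
        omega
    _ = (n - 1) ^ r := card_piFinset_Icc_one ..

theorem sub_le_card_filter_dvd_prod :
    n ^ r - (n - 1) ^ r ≤ #{k ∈ Fintype.piFinset (fun _ : Fin r => Icc 1 n) | n ∣ ∏ i, k i} := by
  have hsplit := card_filter_add_card_filter_not (fun k : Fin r → ℕ => n ∣ ∏ i, k i)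
    (s := Fintype.piFinset fun _ : Fin r => Icc 1 n)
  rw [card_piFinset_Icc_one] at hsplit
  have := card_filter_not_dvd_prod_le n r
  omega

variable {n}

theorem sum_gcd_prod_rpow_le (hn : 0 < n) {w : ℝ} (hw : 0 ≤ w) :
    ∑ k ∈ Fintype.piFinset (fun _ : Fin r => Icc 1 n), (Nat.gcd n (∏ i, k i) : ℝ) ^ w ≤
      n ^ r * (n : ℝ) ^ w := by
  calc _ ≤ ∑ _k ∈ Fintype.piFinset (fun _ : Fin r => Icc 1 n), (n : ℝ) ^ w :=
        sum_le_sum fun k _ =>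
          Real.rpow_le_rpow (by positivity) (by exact_mod_cast Nat.gcd_le_left _ hn) hw
    _ = n ^ r * (n : ℝ) ^ w := by simp

theorem card_mul_rpow_le_sum_gcd_prod_rpow (w : ℝ) :
    ((n ^ r - (n - 1) ^ r : ℕ) : ℝ) * (n : ℝ) ^ w ≤
      ∑ k ∈ Fintype.piFinset (fun _ : Fin r => Icc 1 n), (Nat.gcd n (∏ i, k i) : ℝ) ^ w := by
  set P := Fintype.piFinset fun _ : Fin r => Icc 1 n
  calc _ ≤ (#{k ∈ P | n ∣ ∏ i, k i} : ℝ) * (n : ℝ) ^ w := by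
        gcongr
        exact sub_le_card_filter_dvd_prod n r
    _ = ∑ k ∈ P with n ∣ ∏ i, k i, (Nat.gcd n (∏ i, k i) : ℝ) ^ w := by
        rw [← nsmul_eq_mul, ← sum_const]
        refine sum_congr rfl fun k hk => ?_
        rw [Nat.gcd_eq_left (mem_filter.1 hk).2]
    _ ≤ _ := sum_le_sum_of_subset_of_nonneg (filter_subset _ _) fun _ _ _ => by positivity

theorem average_gcd_prod_rpow_le (hn : 0 < n) {w : ℝ} (hw : 0 ≤ w) :
    (1 / (n : ℝ) ^ r) *
        ∑ k ∈ Fintype.piFinset (fun _ : Fin r => Icc 1 n), (Nat.gcd n (∏ i, k i) : ℝ) ^ w ≤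
      (n : ℝ) ^ w := by
  rw [one_div_mul_eq_div, div_le_iff₀ (by positivity), mul_comm]
  exact sum_gcd_prod_rpow_le r hn hw

theorem rpow_mul_one_sub_le_average_gcd_prod_rpow (hn : 0 < n) (w : ℝ) :
    (n : ℝ) ^ w * (1 - (((n - 1 : ℕ) : ℝ) / n) ^ r) ≤
      (1 / (n : ℝ) ^ r) *
        ∑ k ∈ Fintype.piFinset (fun _ : Fin r => Icc 1 n), (Nat.gcd n (∏ i, k i) : ℝ) ^ w := by
  have hnr : (0 : ℝ) < (n : ℝ) ^ r := by positivity
  rw [one_div_mul_eq_div, le_div_iff₀ hnr]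
  calc (n : ℝ) ^ w * (1 - (((n - 1 : ℕ) : ℝ) / n) ^ r) * n ^ r
      = ((n ^ r - (n - 1) ^ r : ℕ) : ℝ) * (n : ℝ) ^ w := by
        rw [Nat.cast_sub (Nat.pow_le_pow_left (Nat.sub_le n 1) r), div_pow]
        field_simp
        push_cast
        ring
    _ ≤ _ := card_mul_rpow_le_sum_gcd_prod_rpow r w

end GcdProd

theorem stmt_7 (n : ℕ) (hn : 0 < n) (w : ℝ) (hw : 1 < w) :
    Filter.Tendsto
      (fun r : ℕ =>
        (1 / (n : ℝ) ^ r) *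
          ∑ k ∈ Fintype.piFinset (fun _ : Fin r => Finset.Icc 1 n),
            (Nat.gcd n (∏ i, k i) : ℝ) ^ w)
      Filter.atTop (nhds ((n : ℝ) ^ w)) := by
  have hratio : Tendsto (fun r : ℕ => (((n - 1 : ℕ) : ℝ) / n) ^ r) atTop (𝓝 0) := by
    refine tendsto_pow_atTop_nhds_zero_of_lt_one (by positivity) ?_
    rw [div_lt_one (by positivity)]
    exact_mod_cast Nat.sub_lt hn one_pos
  have hlower : Tendsto (fun r : ℕ => (n : ℝ) ^ w * (1 - (((n - 1 : ℕ) : ℝ) / n) ^ r)) atTop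
      (𝓝 ((n : ℝ) ^ w)) := by
    simpa using ((tendsto_const_nhds (x := (1 : ℝ))).sub hratio).const_mul ((n : ℝ) ^ w)
  exact tendsto_of_tendsto_of_tendsto_of_le_of_le hlower tendsto_const_nhds
    (fun r => rpow_mul_one_sub_le_average_gcd_prod_rpow r hn w)
    (fun r => average_gcd_prod_rpow_le r hn (by linarith))
end

section
/- Let R be a commutative ring and let e and r be positive natural numbers. Then for every x ∈ R: (1 - x)^r · ∑_{k=0}^{e-1} H(r, k) · x^k + x^e · ∑_{k=0}^{r-1} H(e, k) · (1 - x)^k = 1, where the coefficients H(·,·) are interpreted via the natural number cast into R. -/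
/-!
Induct on `e`. Passing from `e` to `e + 1` adds `H(r, e) xᵉ` to the first sum, while the
Pascal rule `H(e + 1, k) = H(e, k) + H(e + 1, k - 1)` telescopes `x · ∑ H(e + 1, k) (1 - x)ᵏ`
into `∑ H(e, k) (1 - x)ᵏ - H(e + 1, r - 1) (1 - x)ʳ`; the two changes cancel because
`H(e + 1, r - 1) = H(r, e)`.
-/

theorem Nat.multichoose_succ_comm (m n : ℕ) :
    Nat.multichoose (m + 1) n = Nat.multichoose (n + 1) m := by
  rw [Nat.multichoose_eq, Nat.multichoose_eq, Nat.add_right_comm, Nat.add_sub_cancel,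
    Nat.add_right_comm, Nat.add_sub_cancel, Nat.add_comm n m]
  exact Nat.choose_symm_add.symm

theorem one_sub_mul_sum_multichoose_succ {R : Type*} [CommRing R] (m n : ℕ) (y : R) :
    (1 - y) * ∑ k ∈ Finset.range (n + 1), (Nat.multichoose (m + 1) k : R) * y ^ k
      = ∑ k ∈ Finset.range (n + 1), (Nat.multichoose m k : R) * y ^ k
        - (Nat.multichoose (m + 1) n : R) * y ^ (n + 1) := by
  induction n with
  | zero => simp
  | succ n ih =>
    have pascal : (Nat.multichoose (m + 1) (n + 1) : R)
        = Nat.multichoose m (n + 1) + Nat.multichoose (m + 1) n := by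
      rw [Nat.multichoose_succ_succ, Nat.cast_add]
    rw [Finset.sum_range_succ _ (n + 1), Finset.sum_range_succ _ (n + 1), mul_add, ih, pascal]
    ring

theorem sum_multichoose_zero_mul_pow {R : Type*} [CommRing R] (n : ℕ) (y : R) :
    ∑ k ∈ Finset.range (n + 1), (Nat.multichoose 0 k : R) * y ^ k = 1 := by
  simp [Finset.sum_range_succ', Nat.multichoose_zero_succ]

theorem one_sub_pow_mul_sum_multichoose_add_pow_mul_sum_multichoose {R : Type*} [CommRing R]
    (e s : ℕ) (x : R) :
    (1 - x) ^ (s + 1) * (∑ k ∈ Finset.range e, (Nat.multichoose (s + 1) k : R) * x ^ k)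
      + x ^ e * (∑ k ∈ Finset.range (s + 1), (Nat.multichoose e k : R) * (1 - x) ^ k) = 1 := by
  induction e with
  | zero => simp [sum_multichoose_zero_mul_pow]
  | succ e ih =>
    have telescope := one_sub_mul_sum_multichoose_succ e s (1 - x)
    rw [sub_sub_cancel, Nat.multichoose_succ_comm] at telescope
    rw [Finset.sum_range_succ]
    linear_combination ih + x ^ e * telescope

theorem stmt_11_general (R : Type*) [CommRing R] (e r : ℕ) (hr : 0 < r) (x : R) :
    (1 - x) ^ r * (∑ k ∈ Finset.range e, (Nat.multichoose r k : R) * x ^ k)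
        + x ^ e * (∑ k ∈ Finset.range r, (Nat.multichoose e k : R) * (1 - x) ^ k) = 1 := by
  obtain ⟨s, rfl⟩ : ∃ s, r = s + 1 := ⟨r - 1, by omega⟩
  exact one_sub_pow_mul_sum_multichoose_add_pow_mul_sum_multichoose e s x

theorem stmt_11 (R : Type*) [CommRing R] (e r : ℕ) (he : 0 < e) (hr : 0 < r) (x : R) :
    (1 - x) ^ r * (∑ k ∈ Finset.range e, (Nat.multichoose r k : R) * x ^ k)
        + x ^ e * (∑ k ∈ Finset.range r, (Nat.multichoose e k : R) * (1 - x) ^ k) = 1 :=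
  stmt_11_general R e r hr x
end

section
/- Let p be a prime and let e, r, d be natural numbers with r ≥ 1 and 0 ≤ d < e. Then the number of r-tuples (k₁, …, k_r) with each k_i ∈ {1, 2, …, p^e} such that gcd(p^e, k₁·k₂⋯k_r) = p^d equals (p - 1)^r · H(r, d) · p^{r(e-1) − d}. (Note r(e-1) ≥ d since d ≤ e - 1 ≤ r(e-1).) -/
/-!
For `N ≠ 0` and `d < e`, `gcd (p ^ e) N = p ^ d` says exactly that `v_p(N) = d`, and `v_p` of a
product is the sum of the `v_p` of the factors. Grouping the tuples by their vector of valuations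
`(a₁, …, a_r)`, which runs over the `H(r, d)` solutions of `a₁ + ⋯ + a_r = d`, each group is a
product of sets: `[1, p ^ e]` contains `p ^ (e - a) - p ^ (e - a - 1) = (p - 1) p ^ (e - 1 - a)`
numbers of valuation exactly `a < e`.
-/

open Finset

namespace Nat

theorem card_filter_factorization_eq {p : ℕ} (hp : p.Prime) {e a : ℕ} (ha : a < e) :
    #{k ∈ Icc 1 (p ^ e) | k.factorization p = a} = (p - 1) * p ^ (e - 1 - a) := by
  have hIcc : Icc 1 (p ^ e) = Ioc 0 (p ^ e) := rfl
  have hval : ∀ k ∈ Ioc 0 (p ^ e),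
      k.factorization p = a ↔ p ^ a ∣ k ∧ ¬p ^ (a + 1) ∣ k := fun k hk => by
    have hk : k ≠ 0 := (mem_Ioc.1 hk).1.ne'
    rw [hp.pow_dvd_iff_le_factorization hk, hp.pow_dvd_iff_le_factorization hk]
    omega
  have hsplit : {k ∈ Ioc 0 (p ^ e) | p ^ a ∣ k ∧ ¬p ^ (a + 1) ∣ k}
      = {k ∈ Ioc 0 (p ^ e) | p ^ a ∣ k} \ {k ∈ Ioc 0 (p ^ e) | p ^ (a + 1) ∣ k} := by
    ext k; simp only [mem_filter, mem_sdiff]; tauto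
  have hsub : {k ∈ Ioc 0 (p ^ e) | p ^ (a + 1) ∣ k} ⊆ {k ∈ Ioc 0 (p ^ e) | p ^ a ∣ k} :=
    monotone_filter_right _ fun _ _ => (pow_dvd_pow p a.le_succ).trans
  rw [hIcc, filter_congr hval, hsplit, card_sdiff_of_subset hsub, Ioc_filter_dvd_card_eq_div,
    Ioc_filter_dvd_card_eq_div, Nat.pow_div ha.le hp.pos, Nat.pow_div ha hp.pos,
    show e - a = e - 1 - a + 1 by omega, show e - (a + 1) = e - 1 - a by omega, pow_succ,
    ← Nat.mul_sub_one, mul_comm]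

theorem gcd_prime_pow_eq_pow_iff {p : ℕ} (hp : p.Prime) {e d N : ℕ} (hN : N ≠ 0) (hd : d < e) :
    gcd (p ^ e) N = p ^ d ↔ N.factorization p = d := by
  obtain ⟨c, -, hc⟩ := (Nat.dvd_prime_pow hp).1 (Nat.gcd_dvd_left (p ^ e) N)
  have hmin : min e (N.factorization p) = c := by
    have := congrArg (·.factorization p) hc
    simpa [Nat.factorization_gcd (pow_ne_zero e hp.ne_zero) hN, hp.factorization_pow] using this
  rw [hc, (Nat.pow_right_injective hp.two_le).eq_iff]
  omega

end Nat

theorem Finset.card_piAntidiag_univ {ι : Type*} [Fintype ι] [DecidableEq ι] (n : ℕ) :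
    #(piAntidiag (univ : Finset ι) n) = (Fintype.card ι).multichoose n := by
  rw [← map_sym_eq_piAntidiag, card_map, sym_univ, card_univ, Sym.card_sym_eq_multichoose]

theorem card_piFinset_Icc_factorization_eq {ι : Type*} [Fintype ι] [DecidableEq ι] {p : ℕ}
    (hp : p.Prime) {e : ℕ} {a : ι → ℕ} (ha : ∀ i, a i < e) :
    #{k ∈ Fintype.piFinset fun _ : ι => Icc 1 (p ^ e) | (fun i => (k i).factorization p) = a}
      = (p - 1) ^ Fintype.card ι * p ^ (Fintype.card ι * (e - 1) - ∑ i, a i) := by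
  have hprod : {k ∈ Fintype.piFinset fun _ : ι => Icc 1 (p ^ e) |
      (fun i => (k i).factorization p) = a}
      = Fintype.piFinset fun i => {k ∈ Icc 1 (p ^ e) | k.factorization p = a i} := by
    ext k
    simp only [mem_filter, Fintype.mem_piFinset, funext_iff, forall_and]
  rw [hprod, Fintype.card_piFinset]
  simp only [Nat.card_filter_factorization_eq hp (ha _)]
  rw [prod_mul_distrib, prod_const, prod_pow_eq_pow_sum, card_univ,
    sum_tsub_distrib _ fun i _ => Nat.le_sub_one_of_lt (ha i), sum_const, card_univ, smul_eq_mul]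

theorem stmt_12_general (p : ℕ) (hp : p.Prime) (e r d : ℕ) (hd : d < e) :
    ((Fintype.piFinset (fun _ : Fin r => Finset.Icc 1 (p ^ e))).filter
          (fun k => Nat.gcd (p ^ e) (∏ i, k i) = p ^ d)).card
      = (p - 1) ^ r * Nat.multichoose r d * p ^ (r * (e - 1) - d) := by
  set S := Fintype.piFinset fun _ : Fin r => Icc 1 (p ^ e)
  set v : (Fin r → ℕ) → Fin r → ℕ := fun k i => (k i).factorization p
  have hgcd : ∀ k ∈ S, Nat.gcd (p ^ e) (∏ i, k i) = p ^ d ↔ ∑ i, v k i = d := fun k hk => by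
    have hk : ∀ i ∈ univ, k i ≠ 0 := fun i _ =>
      (Nat.one_le_iff_ne_zero.1 (mem_Icc.1 (Fintype.mem_piFinset.1 hk i)).1)
    rw [Nat.gcd_prime_pow_eq_pow_iff hp (prod_ne_zero_iff.2 hk) hd, Nat.factorization_prod hk,
      Finsupp.finsetSum_apply]
  have hmaps : ∀ k ∈ {k ∈ S | ∑ i, v k i = d}, v k ∈ piAntidiag univ d := fun k hk => by
    simpa [mem_piAntidiag] using (mem_filter.1 hk).2
  have hfiber : ∀ a ∈ piAntidiag univ d,
      #{k ∈ {k ∈ S | ∑ i, v k i = d} | v k = a} = (p - 1) ^ r * p ^ (r * (e - 1) - d) := by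
    intro a ha
    obtain ⟨hsum, -⟩ := mem_piAntidiag.1 ha
    have hle : ∀ i, a i < e := fun i =>
      (single_le_sum (fun j _ => Nat.zero_le (a j)) (mem_univ i)).trans_lt (hsum ▸ hd)
    rw [filter_filter, filter_congr fun k _ => and_iff_right_of_imp fun h => h ▸ hsum,
      card_piFinset_Icc_factorization_eq hp hle, Fintype.card_fin, hsum]
  rw [filter_congr hgcd, card_eq_sum_card_fiberwise hmaps, sum_congr rfl hfiber, sum_const,
    card_piAntidiag_univ, Fintype.card_fin, smul_eq_mul]
  ring

theorem stmt_12 (p : ℕ) (hp : p.Prime) (e r d : ℕ) (hr : 0 < r) (hd : d < e) :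
    ((Fintype.piFinset (fun _ : Fin r => Finset.Icc 1 (p ^ e))).filter
          (fun k => Nat.gcd (p ^ e) (∏ i, k i) = p ^ d)).card
      = (p - 1) ^ r * Nat.multichoose r d * p ^ (r * (e - 1) - d) :=
  stmt_12_general p hp e r d hd
end

section
/- Let p be a prime and let e, r be positive natural numbers. Then the number of r-tuples (k₁, …, k_r) with each k_i ∈ {1, 2, …, p^e} such that gcd(p^e, k₁·k₂⋯k_r) = p^e equals ∑_{l=0}^{r-1} H(e, l) · (p - 1)^l · p^{e(r-1) − l}. (Note e(r-1) ≥ l for each l ≤ r - 1 since e ≥ 1.) -/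
/-!
Let `N_n(s)` be the number of `n`-tuples from `[1, p^e]` whose product is divisible by `p^s`.
Exactly `(p - 1) p^(e-a-1)` elements of `[1, p^e]` have `p`-adic valuation `a < e`, and a first
entry of valuation `v` leaves `p^(s - v)` to be divided by the product of the others, so
`N_{n+1}(s) = p^(e-s) N_n(0) + ∑_{b<s} (p - 1) p^(e-s+b) N_n(b+1)`.
Induction on `n` with the hockey-stick identity `∑_{b<s} H(b+1, l) = H(s, l+1)` gives
`N_{n+1}(s) = ∑_{l≤n} H(s, l) (p - 1)^l p^(e(n+1)-s-l)`, and the theorem is the case `s = e`.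
-/

open Finset

lemma card_filter_piFinset_fin_succ {α : Type*} [DecidableEq α] {n : ℕ} (S : Finset α)
    (P : (Fin (n + 1) → α) → Prop) [DecidablePred P] :
    #{r ∈ Fintype.piFinset fun _ => S | P r} =
      ∑ x ∈ S, #{t ∈ Fintype.piFinset fun _ : Fin n => S | P (Fin.cons x t)} := by
  rw [card_eq_sum_card_fiberwise (f := fun r => r 0) (t := S)
    fun r hr => Fintype.mem_piFinset.1 (mem_filter.1 hr).1 0]
  refine sum_congr rfl fun x hx => card_nbij' Fin.tail (fun t => Fin.cons x t) ?_ ?_ ?_ ?_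
    <;> simp only [coe_filter, mem_filter]
  · rintro r ⟨⟨hr, hP⟩, rfl⟩
    exact ⟨(Fin.mem_piFinset_iff_zero_tail.1 hr).2, by rwa [Fin.cons_self_tail]⟩
  · rintro t ⟨ht, hP⟩
    exact ⟨⟨Fin.mem_piFinset_iff_zero_tail.2 ⟨hx, ht⟩, hP⟩, Fin.cons_zero _ _⟩
  · rintro r ⟨-, rfl⟩
    exact Fin.cons_self_tail r
  · intro t _
    exact Fin.tail_cons _ _

lemma Nat.sum_range_succ_multichoose (s l : ℕ) :
    ∑ b ∈ range s, (b + 1).multichoose l = s.multichoose (l + 1) := by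
  induction s with
  | zero => simp
  | succ s ih => rw [sum_range_succ, ih, Nat.multichoose_succ_succ]

lemma Nat.Prime.pow_dvd_mul_iff_sub_factorization {p s x K : ℕ} (hp : p.Prime) (hx : x ≠ 0)
    (hK : K ≠ 0) : p ^ s ∣ x * K ↔ p ^ (s - x.factorization p) ∣ K := by
  rw [hp.pow_dvd_iff_le_factorization (mul_ne_zero hx hK), hp.pow_dvd_iff_le_factorization hK,
    Nat.factorization_mul hx hK, Finsupp.add_apply]
  omega

lemma Nat.Icc_one_filter_dvd_card_eq_div (n d : ℕ) : #{x ∈ Icc 1 n | d ∣ x} = n / d := by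
  simpa [← Icc_add_one_left_eq_Ioc] using Nat.Ioc_filter_dvd_card_eq_div n d

lemma Nat.card_Icc_one_prime_pow_filter_factorization_eq {p e a : ℕ} (hp : p.Prime)
    (ha : a < e) :
    #{x ∈ Icc 1 (p ^ e) | x.factorization p = a} = (p - 1) * p ^ (e - a - 1) := by
  have hsplit : {x ∈ Icc 1 (p ^ e) | x.factorization p = a} =
      {x ∈ Icc 1 (p ^ e) | p ^ a ∣ x} \ {x ∈ Icc 1 (p ^ e) | p ^ (a + 1) ∣ x} := by
    ext x
    simp only [mem_sdiff, mem_filter]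
    by_cases hx : x ∈ Icc 1 (p ^ e)
    · have hx0 : x ≠ 0 := by grind
      simp only [hx, hp.pow_dvd_iff_le_factorization hx0, true_and]
      omega
    · simp only [hx, false_and]
  have hsub : {x ∈ Icc 1 (p ^ e) | p ^ (a + 1) ∣ x} ⊆ {x ∈ Icc 1 (p ^ e) | p ^ a ∣ x} :=
    monotone_filter_right _ fun _ _ => (pow_dvd_pow p a.le_succ).trans
  rw [hsplit, card_sdiff_of_subset hsub, Nat.Icc_one_filter_dvd_card_eq_div,
    Nat.Icc_one_filter_dvd_card_eq_div, Nat.pow_div ha.le hp.pos, Nat.pow_div ha hp.pos,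
    Nat.sub_one_mul, ← pow_succ']
  congr 2
  omega

lemma Nat.sum_Icc_one_prime_pow_sub_factorization {M : Type*} [AddCommMonoid M] {p e s : ℕ}
    (hp : p.Prime) (hs : s ≤ e) (f : ℕ → M) :
    ∑ x ∈ Icc 1 (p ^ e), f (s - x.factorization p) =
      p ^ (e - s) • f 0 + ∑ b ∈ range s, ((p - 1) * p ^ (e - s + b)) • f (b + 1) := by
  have hfiber (b : ℕ) : ∑ x ∈ Icc 1 (p ^ e) with s - x.factorization p = b,
      f (s - x.factorization p) = #{x ∈ Icc 1 (p ^ e) | s - x.factorization p = b} • f b := by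
    rw [sum_congr rfl fun x hx => by rw [(mem_filter.1 hx).2], sum_const]
  rw [← sum_fiberwise_of_maps_to (t := range (s + 1)) (g := fun x => s - x.factorization p)
      fun x _ => mem_range.2 (by omega),
    sum_range_succ', add_comm]
  simp only [hfiber]
  congr 1
  · rw [← Nat.pow_div hs hp.pos, ← Nat.Icc_one_filter_dvd_card_eq_div]
    congr 2
    refine filter_congr fun x hx => ?_
    rw [hp.pow_dvd_iff_le_factorization (by grind)]
    omega
  · refine sum_congr rfl fun b hb => ?_
    have hb : b < s := mem_range.1 hb
    rw [filter_congr (q := fun x => x.factorization p = s - (b + 1)) fun x _ => by omega,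
      Nat.card_Icc_one_prime_pow_filter_factorization_eq hp (by omega)]
    congr 3
    omega

def dvdProdTuples (m n d : ℕ) : Finset (Fin n → ℕ) :=
  {k ∈ Fintype.piFinset fun _ : Fin n => Icc 1 m | d ∣ ∏ i, k i}

lemma card_dvdProdTuples_one (m n : ℕ) : #(dvdProdTuples m n 1) = m ^ n := by
  simp [dvdProdTuples]

lemma dvdProdTuples_zero_of_ne_one {m d : ℕ} (hd : d ≠ 1) : dvdProdTuples m 0 d = ∅ := by
  simp [dvdProdTuples, hd]

lemma card_dvdProdTuples_succ {p : ℕ} (hp : p.Prime) (m n s : ℕ) :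
    #(dvdProdTuples m (n + 1) (p ^ s)) =
      ∑ x ∈ Icc 1 m, #(dvdProdTuples m n (p ^ (s - x.factorization p))) := by
  rw [dvdProdTuples, card_filter_piFinset_fin_succ]
  refine sum_congr rfl fun x hx => congrArg card (filter_congr fun t ht => ?_)
  have hK : ∏ i, t i ≠ 0 := prod_ne_zero_iff.2 fun i _ => by
    have := Fintype.mem_piFinset.1 ht i
    grind
  rw [Fin.prod_univ_succ, Fin.cons_zero]
  simp only [Fin.cons_succ]
  exact hp.pow_dvd_mul_iff_sub_factorization (by grind) hK

lemma card_dvdProdTuples_succ_prime_pow {p e s : ℕ} (hp : p.Prime) (hs : s ≤ e) (n : ℕ) :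
    #(dvdProdTuples (p ^ e) (n + 1) (p ^ s)) = p ^ (e - s) * p ^ (e * n) +
      ∑ b ∈ range s, (p - 1) * p ^ (e - s + b) * #(dvdProdTuples (p ^ e) n (p ^ (b + 1))) := by
  rw [card_dvdProdTuples_succ hp, Nat.sum_Icc_one_prime_pow_sub_factorization hp hs
    (fun b => #(dvdProdTuples (p ^ e) n (p ^ b))), pow_zero, card_dvdProdTuples_one, pow_mul]
  simp only [smul_eq_mul]

theorem card_dvdProdTuples_prime_pow {p e : ℕ} (hp : p.Prime) (n : ℕ) {s : ℕ} (hs : s ≤ e) :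
    #(dvdProdTuples (p ^ e) (n + 1) (p ^ s)) =
      ∑ l ∈ range (n + 1), s.multichoose l * (p - 1) ^ l * p ^ (e * (n + 1) - s - l) := by
  induction n generalizing s with
  | zero =>
    have hne (b : ℕ) : p ^ (b + 1) ≠ 1 := (Nat.one_lt_pow b.succ_ne_zero hp.one_lt).ne'
    simp [card_dvdProdTuples_succ_prime_pow hp hs, dvdProdTuples_zero_of_ne_one (hne _)]
  | succ n ih =>
    rw [card_dvdProdTuples_succ_prime_pow hp hs, sum_range_succ' _ (n + 1), add_comm]
    congr 1
    · calc _ = ∑ b ∈ range s, ∑ l ∈ range (n + 1), (b + 1).multichoose l *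
              ((p - 1) ^ (l + 1) * p ^ (e * (n + 1 + 1) - s - (l + 1))) := by
            refine sum_congr rfl fun b hb => ?_
            have hb : b < s := mem_range.1 hb
            rw [ih (by omega), mul_sum]
            refine sum_congr rfl fun l hl => ?_
            have hl : l ≤ n := Nat.lt_succ_iff.1 (mem_range.1 hl)
            have hn : n ≤ e * n := Nat.le_mul_of_pos_left n (by omega)
            have hexp : e - s + b + (e * (n + 1) - (b + 1) - l) =
                e * (n + 1 + 1) - s - (l + 1) := by
              simp only [mul_add_one]
              omega
            rw [← hexp, pow_add, pow_succ]
            ring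
        _ = _ := by
            rw [sum_comm]
            simp only [← sum_mul, Nat.sum_range_succ_multichoose, mul_assoc]
    · rw [Nat.multichoose_zero_right, pow_zero, one_mul, one_mul, Nat.sub_zero, ← pow_add]
      congr 1
      simp only [mul_add_one]
      omega

theorem stmt_13_general (p : ℕ) (hp : p.Prime) (e r : ℕ) (hr : 0 < r) :
    ((Fintype.piFinset (fun _ : Fin r => Finset.Icc 1 (p ^ e))).filter
          (fun k => Nat.gcd (p ^ e) (∏ i, k i) = p ^ e)).card
      = ∑ l ∈ Finset.range r, Nat.multichoose e l * (p - 1) ^ l * p ^ (e * (r - 1) - l) := by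
  obtain ⟨n, rfl⟩ : ∃ n, r = n + 1 := ⟨r - 1, by omega⟩
  have hgcd : {k ∈ Fintype.piFinset fun _ : Fin (n + 1) => Icc 1 (p ^ e) |
      Nat.gcd (p ^ e) (∏ i, k i) = p ^ e} = dvdProdTuples (p ^ e) (n + 1) (p ^ e) := by
    simp only [Nat.gcd_eq_left_iff_dvd]
    rfl
  rw [hgcd, card_dvdProdTuples_prime_pow hp n le_rfl]
  simp only [mul_add_one, Nat.add_sub_cancel]

theorem stmt_13 (p : ℕ) (hp : p.Prime) (e r : ℕ) (he : 0 < e) (hr : 0 < r) :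
    ((Fintype.piFinset (fun _ : Fin r => Finset.Icc 1 (p ^ e))).filter
          (fun k => Nat.gcd (p ^ e) (∏ i, k i) = p ^ e)).card
      = ∑ l ∈ Finset.range r, Nat.multichoose e l * (p - 1) ^ l * p ^ (e * (r - 1) - l) :=
  stmt_13_general p hp e r hr
end

section
/- For all positive natural numbers n, r and every real number w, we have (1/n^r) · ∑_{k₁=1}^{n} ⋯ ∑_{k_r=1}^{n} gcd(n, k₁⋯k_r)^w = ∏_{p prime, p ∣ n} [ (1/p^{r·ord_p(n)}) · ∑_{k₁=1}^{p^{ord_p(n)}} ⋯ ∑_{k_r=1}^{p^{ord_p(n)}} gcd(p^{ord_p(n)}, k₁⋯k_r)^w ], where powers with real exponent w are real powers (rpow) of positive real bases and the product ranges over the distinct prime divisors of n. -/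
/-!
Reducing `k₁, …, k_r` modulo `n` turns the sum into one over `(ℤ/n)^r`, since `gcd(n, t)`
depends only on `t mod n`. For coprime `m, n` the Chinese remainder theorem identifies
`(ℤ/mn)^r` with `(ℤ/m)^r × (ℤ/n)^r`, compatibly with products, and
`gcd(mn, t) = gcd(m, t) · gcd(n, t)` with coprime factors. Hence the normalised moment is a
multiplicative function of `n`, and the product formula is its value on the factorization of `n`.
-/

open Finset

theorem ZMod.gcd_val_natCast (n a : ℕ) : Nat.gcd n (a : ZMod n).val = Nat.gcd n a := by
  rw [ZMod.val_natCast, Nat.gcd_comm, ← Nat.gcd_rec]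

theorem ZMod.chineseRemainder_apply {m n : ℕ} [NeZero m] [NeZero n] (h : m.Coprime n)
    (x : ZMod (m * n)) : chineseRemainder h x = ((x.val : ZMod m), (x.val : ZMod n)) := by
  conv_lhs => rw [← ZMod.natCast_zmod_val x]
  rw [map_natCast]
  rfl

theorem sum_piFinset_Icc_eq_sum_zmod {ι M : Type*} [Fintype ι] [DecidableEq ι]
    [AddCommMonoid M] (n : ℕ) [NeZero n] (g : ℕ → M) :
    ∑ k ∈ Fintype.piFinset (fun _ : ι => Icc 1 n), g (Nat.gcd n (∏ i, k i)) =
      ∑ z : ι → ZMod n, g (Nat.gcd n (∏ i, z i).val) := by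
  refine sum_nbij' (fun k i => (k i : ZMod n)) (fun z i => (z i - 1).val + 1) ?_ ?_ ?_ ?_ ?_
  · simp
  · intro z _
    rw [Fintype.mem_piFinset]
    exact fun i => mem_Icc.mpr ⟨Nat.le_add_left _ _, (z i - 1).val_lt⟩
  · intro k hk
    funext i
    have hki := mem_Icc.mp (Fintype.mem_piFinset.mp hk i)
    rw [← Nat.cast_one, ← Nat.cast_sub hki.1, ZMod.val_natCast, Nat.mod_eq_of_lt (by omega)]
    omega
  · intro z _
    funext i
    simp
  · intro k _
    rw [← Nat.cast_prod, ZMod.gcd_val_natCast]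

theorem sum_pi_zmod_gcd_prod_mul {ι R : Type*} [Fintype ι] [DecidableEq ι] [CommSemiring R]
    (f : ℕ → R) (hf : ∀ a b, a.Coprime b → f (a * b) = f a * f b) {m n : ℕ}
    [NeZero m] [NeZero n] (h : m.Coprime n) :
    ∑ z : ι → ZMod (m * n), f (Nat.gcd (m * n) (∏ i, z i).val) =
      (∑ x : ι → ZMod m, f (Nat.gcd m (∏ i, x i).val)) *
        ∑ y : ι → ZMod n, f (Nat.gcd n (∏ i, y i).val) := by
  let e := ZMod.chineseRemainder h
  let E : (ι → ZMod (m * n)) ≃ (ι → ZMod m) × (ι → ZMod n) :=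
    (Equiv.piCongrRight fun _ => e.toEquiv).trans (Equiv.arrowProdEquivProdArrow _ _ _)
  rw [sum_mul_sum, ← Fintype.sum_prod_type']
  refine Fintype.sum_equiv E _ _ fun z => ?_
  have hfst : ∏ i, (E z).1 i = ((∏ i, z i).val : ZMod m) := by
    change ∏ i, (e (z i)).1 = _
    rw [← Prod.fst_prod, ← map_prod, ZMod.chineseRemainder_apply]
  have hsnd : ∏ i, (E z).2 i = ((∏ i, z i).val : ZMod n) := by
    change ∏ i, (e (z i)).2 = _
    rw [← Prod.snd_prod, ← map_prod, ZMod.chineseRemainder_apply]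
  have hcop : (m.gcd (∏ i, z i).val).Coprime (n.gcd (∏ i, z i).val) :=
    Nat.Coprime.coprime_dvd_left (Nat.gcd_dvd_left _ _)
      (Nat.Coprime.coprime_dvd_right (Nat.gcd_dvd_left _ _) h)
  rw [hfst, hsnd, ZMod.gcd_val_natCast, ZMod.gcd_val_natCast, h.mul_gcd, hf _ _ hcop]

noncomputable def gcdMoment (r : ℕ) (w : ℝ) (n : ℕ) : ℝ :=
  (1 / (n : ℝ) ^ r) *
    ∑ k ∈ Fintype.piFinset (fun _ : Fin r => Icc 1 n), (Nat.gcd n (∏ i, k i) : ℝ) ^ w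

theorem gcdMoment_one (r : ℕ) (w : ℝ) : gcdMoment r w 1 = 1 := by
  simp [gcdMoment]

theorem gcdMoment_mul (r : ℕ) (w : ℝ) {m n : ℕ} (h : m.Coprime n) :
    gcdMoment r w (m * n) = gcdMoment r w m * gcdMoment r w n := by
  rcases Nat.eq_zero_or_pos m with rfl | hm
  · simp [(Nat.coprime_zero_left n).mp h, gcdMoment_one]
  rcases Nat.eq_zero_or_pos n with rfl | hn
  · simp [(Nat.coprime_zero_right m).mp h, gcdMoment_one]
  have : NeZero m := ⟨hm.ne'⟩
  have : NeZero n := ⟨hn.ne'⟩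
  have hrpow : ∀ a b : ℕ, a.Coprime b →
      ((a * b : ℕ) : ℝ) ^ w = (a : ℝ) ^ w * (b : ℝ) ^ w :=
    fun a b _ => by rw [Nat.cast_mul, Real.mul_rpow (Nat.cast_nonneg _) (Nat.cast_nonneg _)]
  simp only [gcdMoment, sum_piFinset_Icc_eq_sum_zmod _ (fun d : ℕ => (d : ℝ) ^ w)]
  rw [sum_pi_zmod_gcd_prod_mul (fun d : ℕ => (d : ℝ) ^ w) hrpow h, Nat.cast_mul, mul_pow]
  ring

theorem stmt_15_general (n r : ℕ) (hn : 0 < n) (w : ℝ) :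
    (1 / (n : ℝ) ^ r) *
        ∑ k ∈ Fintype.piFinset (fun _ : Fin r => Finset.Icc 1 n),
          (Nat.gcd n (∏ i, k i) : ℝ) ^ w =
      ∏ p ∈ n.primeFactors,
        (1 / (p : ℝ) ^ (r * n.factorization p)) *
          ∑ k ∈ Fintype.piFinset (fun _ : Fin r => Finset.Icc 1 (p ^ n.factorization p)),
            (Nat.gcd (p ^ n.factorization p) (∏ i, k i) : ℝ) ^ w := by
  change gcdMoment r w n = _
  rw [Nat.multiplicative_factorization _ (fun _ _ => gcdMoment_mul r w) (gcdMoment_one r w)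
    hn.ne', Nat.prod_factorization_eq_prod_primeFactors]
  refine prod_congr rfl fun p _ => ?_
  rw [gcdMoment, Nat.cast_pow, ← pow_mul, mul_comm r]

theorem stmt_15 (n r : ℕ) (hn : 0 < n) (hr : 0 < r) (w : ℝ) :
    (1 / (n : ℝ) ^ r) *
        ∑ k ∈ Fintype.piFinset (fun _ : Fin r => Finset.Icc 1 n),
          (Nat.gcd n (∏ i, k i) : ℝ) ^ w =
      ∏ p ∈ n.primeFactors,
        (1 / (p : ℝ) ^ (r * n.factorization p)) *
          ∑ k ∈ Fintype.piFinset (fun _ : Fin r => Finset.Icc 1 (p ^ n.factorization p)),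
            (Nat.gcd (p ^ n.factorization p) (∏ i, k i) : ℝ) ^ w :=
  stmt_15_general n r hn w
end

section
/- Let R and S be finite commutative rings, let r be a positive natural number, and let m be a natural number. Then ∑ over all r-tuples ((a₁,b₁), …, (a_r,b_r)) of elements of R × S of card((R × S) ⧸ span{(a₁,b₁)⋯(a_r,b_r)})^m equals ( ∑ over all r-tuples (a₁, …, a_r) of elements of R of card(R ⧸ span{a₁⋯a_r})^m ) · ( ∑ over all r-tuples (b₁, …, b_r) of elements of S of card(S ⧸ span{b₁⋯b_r})^m ), where span{x} denotes the principal ideal generated by x and card denotes the cardinality of the quotient ring. -/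
/-! A principal ideal of `R × S` is the product of the principal ideals generated by the two
components, so the size of the quotient is multiplicative and the sum over `(R × S)ʳ` splits
into a product along `(R × S)ʳ ≃ Rʳ × Sʳ`. -/

theorem Ideal.span_singleton_prod_mk {R S : Type*} [Semiring R] [Semiring S] (a : R) (b : S) :
    Ideal.span {(a, b)} = (Ideal.span {a}).prod (Ideal.span {b}) := by
  rw [← Ideal.span_prod (by simp), Set.singleton_prod_singleton]

theorem Ideal.card_quotient_prod {R S : Type*} [CommRing R] [CommRing S] (I : Ideal R)
    (J : Ideal S) : Nat.card ((R × S) ⧸ I.prod J) = Nat.card (R ⧸ I) * Nat.card (S ⧸ J) := by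
  rw [← Nat.card_prod]
  exact Nat.card_congr (QuotientAddGroup.prodEquiv I.toAddSubgroup J.toAddSubgroup)

theorem sum_card_quotient_span_prod_pow {ι R S : Type*} [Fintype ι] [DecidableEq ι]
    [CommRing R] [CommRing S] [Fintype R] [Fintype S] (m : ℕ) :
    (∑ k : ι → R × S, Nat.card ((R × S) ⧸ Ideal.span {∏ i, k i}) ^ m)
      = (∑ a : ι → R, Nat.card (R ⧸ Ideal.span {∏ i, a i}) ^ m)
        * (∑ b : ι → S, Nat.card (S ⧸ Ideal.span {∏ i, b i}) ^ m) := by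
  rw [Finset.sum_mul_sum, ← Fintype.sum_prod_type']
  refine Fintype.sum_equiv (Equiv.arrowProdEquivProdArrow ι _ _) _ _ fun k ↦ ?_
  rw [← mul_pow, ← Ideal.card_quotient_prod, ← Ideal.span_singleton_prod_mk, prod_mk_prod]
  rfl

theorem stmt_17_general (R S : Type*) [CommRing R] [CommRing S] [Fintype R] [Fintype S]
    (r : ℕ) (m : ℕ) :
    (∑ k : Fin r → R × S, Nat.card ((R × S) ⧸ Ideal.span {∏ i, k i}) ^ m)
      = (∑ a : Fin r → R, Nat.card (R ⧸ Ideal.span {∏ i, a i}) ^ m)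
        * (∑ b : Fin r → S, Nat.card (S ⧸ Ideal.span {∏ i, b i}) ^ m) :=
  sum_card_quotient_span_prod_pow m

theorem stmt_17 (R S : Type*) [CommRing R] [CommRing S] [Fintype R] [Fintype S]
    (r : ℕ) (hr : 0 < r) (m : ℕ) :
    (∑ k : Fin r → R × S, Nat.card ((R × S) ⧸ Ideal.span {∏ i, k i}) ^ m)
      = (∑ a : Fin r → R, Nat.card (R ⧸ Ideal.span {∏ i, a i}) ^ m)
        * (∑ b : Fin r → S, Nat.card (S ⧸ Ideal.span {∏ i, b i}) ^ m) :=
  stmt_17_general R S r m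
end
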